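/- arXiv:2209.13862 — 2 statements merged into one kernel-verified Lean document; each statement's English description precedes it below -/
import Mathlib

section
/- Let P_X be a pmf supported on 𝒳={x_1,…,x_n} with p_1 ≥ p_2 ≥ … ≥ p_n > 0 where p_i=P_X(x_i), let α∈(0,1)∪(1,∞), and let k be an integer with 1 ≤ k < n. Then the minimal expected α-loss under k guesses equals ME_α^{(k)}(P_X) = (α/(α−1))·Σ_{i=s*}^{n} p_i·(1 − ((k−s*+1)·p_i^α / Σ_{j=s*}^{n} p_j^α)^{(α−1)/α}), where s* = min{ r∈{1,…,k} : (k−r+1)·p_r^α ≤ Σ_{i=r}^{n} p_i^α }. -/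
/-!
Write `c x` for the probability that a strategy covers `x`; the expected loss is
`∑ p x * ℓ_α (c x)`, a convex function of `c`. Covering vectors satisfy `0 ≤ c ≤ 1` and
`∑ c ≤ k`, and conversely every point of the hypersimplex `{0 ≤ c ≤ 1, ∑ c = k}` is a covering
vector: by Krein–Milman it is a mixture of extreme points, these are indicators of `k`-sets, and
an indicator of a `k`-set is covered by the strategy that guesses exactly that set.

So the minimal loss is that of the convex program `min ∑ p x * ℓ_α (c x)` over
`0 ≤ c ≤ 1, ∑ c ≤ k`. Its minimiser is a water-filling: the `s* - 1` most likely elements get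
`c = 1`, the others `c ∝ p ^ α`. Optimality follows from the KKT conditions via the tangent-line
bound for `ℓ_α`; the minimality of `s*` is exactly what makes the multiplier at most `p x` on
the elements covered surely.
-/

open Finset

/-- A probability mass function on a finite type. -/
def IsPMF {α : Type*} [Fintype α] (p : α → ℝ) : Prop :=
  (∀ a, 0 ≤ p a) ∧ ∑ a, p a = 1

open Classical in
/-- The probability that a `k`-guess strategy `Q` covers `u`, i.e. the probability that some
guess equals `u`. -/
noncomputable def coversG {U : Type*} [Fintype U] {k : ℕ} (Q : (Fin k → U) → ℝ) (u : U) : ℝ :=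
  ∑ a : Fin k → U, if ∃ j, a j = u then Q a else 0

/-- The `α`-loss `ℓ_α(p) = (α/(α−1))(1 − p^{(α−1)/α})`, valued in `EReal` so that
`ℓ_α(0) = ⊤` for `α < 1` (where the real-valued formula would be meaningless). -/
noncomputable def alphaLossE (α p : ℝ) : EReal :=
  if p = 0 ∧ α < 1 then ⊤
  else (((α / (α - 1)) * (1 - p ^ ((α - 1) / α)) : ℝ) : EReal)

/-- `s* = min{ r ∈ {1,…,k} : (k−r+1) p_r^α ≤ ∑_{i=r}^n p_i^α }`. -/
noncomputable def sstar (α : ℝ) (p : ℕ → ℝ) (k n : ℕ) : ℕ :=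
  sInf {r : ℕ | 1 ≤ r ∧ r ≤ k ∧
    ((k : ℝ) - r + 1) * p r ^ α ≤ ∑ i ∈ Finset.Icc r n, p i ^ α}

/-- `(α/(α−1)) ∑_{i=s*}^n p_i (1 − ((k−s*+1) p_i^α / ∑_{j=s*}^n p_j^α)^{(α−1)/α})`. -/
noncomputable def MEalpha (α : ℝ) (p : ℕ → ℝ) (k n : ℕ) : ℝ :=
  (α / (α - 1)) *
    ∑ i ∈ Finset.Icc (sstar α p k n) n,
      p i * (1 - (((k : ℝ) - (sstar α p k n : ℕ) + 1) * p i ^ α /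
        ∑ j ∈ Finset.Icc (sstar α p k n) n, p j ^ α) ^ ((α - 1) / α))

open Real

noncomputable def alphaLoss (α q : ℝ) : ℝ := α / (α - 1) * (1 - q ^ ((α - 1) / α))

lemma rpow_sub_one_div_le_sub_one {β x : ℝ} (hβ0 : β ≠ 0) (hβ1 : β ≤ 1) (hx : 0 ≤ x)
    (hx' : 0 < x ∨ 0 < β) : (x ^ β - 1) / β ≤ x - 1 := by
  rcases hβ0.lt_or_gt with hβ | hβ
  · have hx : 0 < x := hx'.resolve_right hβ.not_gt
    rw [div_le_iff_of_neg hβ]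
    calc (x - 1) * β ≤ log x * β := mul_le_mul_of_nonpos_right (log_le_sub_one_of_pos hx) hβ.le
      _ ≤ x ^ β - 1 := by rw [rpow_def_of_pos hx]; linarith [add_one_le_exp (log x * β)]
  · rw [div_le_iff₀ hβ]
    have := rpow_one_add_le_one_add_mul_self (s := x - 1) (by linarith) hβ.le hβ1
    rw [add_sub_cancel] at this
    linarith

-- `-t ^ (-α⁻¹)` is the derivative of `ℓ_α` at `t`: this is the tangent line of a convex function.
lemma alphaLoss_tangent_le {α t q : ℝ} (hα0 : 0 < α) (hα1 : α ≠ 1) (ht : 0 < t) (hq : 0 ≤ q)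
    (hq' : 0 < q ∨ 1 < α) : alphaLoss α t - t ^ (-α⁻¹) * (q - t) ≤ alphaLoss α q := by
  set β := (α - 1) / α with hβ
  have hβ0 : β ≠ 0 := div_ne_zero (sub_ne_zero.2 hα1) hα0.ne'
  have hloss : ∀ x, alphaLoss α x = (1 - x ^ β) / β := fun x => by
    rw [alphaLoss, hβ]; field_simp
  have hexp : -α⁻¹ = β - 1 := by rw [hβ]; field_simp; ring
  have hqt : q ^ β = t ^ β * (q / t) ^ β := by
    rw [div_rpow hq ht.le, mul_div_cancel₀ _ (rpow_pos_of_pos ht β).ne']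
  have key := rpow_sub_one_div_le_sub_one hβ0 (by rw [hβ, div_le_one hα0]; linarith)
    (div_nonneg hq ht.le)
    (hq'.imp (div_pos · ht) fun h => div_pos (by linarith) hα0)
  have := mul_le_mul_of_nonneg_left key (rpow_pos_of_pos ht β).le
  rw [hloss, hloss, hexp, rpow_sub_one ht.ne']
  calc (1 - t ^ β) / β - t ^ β / t * (q - t)
      = (1 - q ^ β) / β + (t ^ β * ((q / t) ^ β - 1) / β - t ^ β * (q / t - 1)) := by
        rw [hqt]; field_simp; ring
    _ ≤ (1 - q ^ β) / β := by
        have : t ^ β * ((q / t) ^ β - 1) / β ≤ t ^ β * (q / t - 1) := by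
          rw [mul_div_assoc]; exact this
        linarith

lemma alphaLoss_one (α : ℝ) : alphaLoss α 1 = 0 := by simp [alphaLoss]

lemma alphaLoss_nonneg {α q : ℝ} (hα0 : 0 < α) (hα1 : α ≠ 1) (hq0 : 0 ≤ q) (hq1 : q ≤ 1)
    (hq' : 0 < q ∨ 1 < α) : 0 ≤ alphaLoss α q := by
  have := alphaLoss_tangent_le hα0 hα1 one_pos hq0 hq'
  rw [alphaLoss_one, one_rpow] at this
  linarith

lemma alphaLossE_eq_coe_alphaLoss {α q : ℝ} (h : ¬(q = 0 ∧ α < 1)) :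
    alphaLossE α q = alphaLoss α q :=
  if_neg h

lemma alphaLossE_nonneg {α q : ℝ} (hα0 : 0 < α) (hα1 : α ≠ 1) (hq0 : 0 ≤ q) (hq1 : q ≤ 1) :
    0 ≤ alphaLossE α q := by
  by_cases h : q = 0 ∧ α < 1
  · simp [alphaLossE, h]
  · rw [alphaLossE_eq_coe_alphaLoss h, EReal.coe_nonneg]
    refine alphaLoss_nonneg hα0 hα1 hq0 hq1 ?_
    by_contra! h'
    exact h ⟨le_antisymm h'.1 hq0, lt_of_le_of_ne h'.2 hα1⟩

lemma EReal.coe_finset_sum {ι : Type*} (s : Finset ι) (f : ι → ℝ) :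
    ((∑ i ∈ s, f i : ℝ) : EReal) = ∑ i ∈ s, (f i : EReal) :=
  map_sum (⟨⟨Real.toEReal, EReal.coe_zero⟩, EReal.coe_add⟩ : ℝ →+ EReal) f s

section Optimality

variable {ι : Type*} [Fintype ι] {α lam : ℝ} {w t q : ι → ℝ}

/-- `hkkt` is the Karush–Kuhn–Tucker condition at `t`: the multiplier `lam` of the constraint
`∑ q ≤ ∑ t` equals the marginal weight `w i * t i ^ (-α⁻¹)` except where `q i ≤ 1` is active. -/
lemma sum_mul_alphaLoss_le_of_kkt (hα0 : 0 < α) (hα1 : α ≠ 1) (hlam : 0 ≤ lam)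
    (hw : ∀ i, 0 ≤ w i) (ht : ∀ i, 0 < t i)
    (hkkt : ∀ i, w i * t i ^ (-α⁻¹) = lam ∨ (t i = 1 ∧ lam ≤ w i))
    (hq0 : ∀ i, 0 ≤ q i) (hq1 : ∀ i, q i ≤ 1) (hq : ∀ i, 0 < q i ∨ 1 < α)
    (hsum : ∑ i, q i ≤ ∑ i, t i) :
    ∑ i, w i * alphaLoss α (t i) ≤ ∑ i, w i * alphaLoss α (q i) := by
  have hterm : ∀ i, w i * alphaLoss α (t i) - lam * (q i - t i) ≤ w i * alphaLoss α (q i) := by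
    intro i
    have htan := mul_le_mul_of_nonneg_left
      (alphaLoss_tangent_le hα0 hα1 (ht i) (hq0 i) (hq i)) (hw i)
    have hmarg : w i * t i ^ (-α⁻¹) * (q i - t i) ≤ lam * (q i - t i) := by
      rcases hkkt i with h | ⟨h1, hle⟩
      · rw [h]
      · rw [h1, one_rpow, mul_one]
        exact mul_le_mul_of_nonpos_right hle (by linarith [hq1 i])
    linarith
  have hmult : lam * (∑ i, q i - ∑ i, t i) ≤ 0 := mul_nonpos_of_nonneg_of_nonpos hlam (by linarith)
  calc ∑ i, w i * alphaLoss α (t i)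
      = ∑ i, (w i * alphaLoss α (t i) - lam * (q i - t i)) + lam * (∑ i, q i - ∑ i, t i) := by
        rw [sum_sub_distrib, ← mul_sum, sum_sub_distrib]; ring
    _ ≤ ∑ i, w i * alphaLoss α (q i) := by
        have := sum_le_sum fun i (_ : i ∈ univ) => hterm i
        linarith

lemma sum_mul_alphaLossE_le_of_kkt (hα0 : 0 < α) (hα1 : α ≠ 1) (hlam : 0 ≤ lam)
    (hw : ∀ i, 0 < w i) (ht : ∀ i, 0 < t i)
    (hkkt : ∀ i, w i * t i ^ (-α⁻¹) = lam ∨ (t i = 1 ∧ lam ≤ w i))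
    (hq0 : ∀ i, 0 ≤ q i) (hq1 : ∀ i, q i ≤ 1) (hsum : ∑ i, q i ≤ ∑ i, t i) :
    ∑ i, (w i : EReal) * alphaLossE α (t i) ≤ ∑ i, (w i : EReal) * alphaLossE α (q i) := by
  by_cases hdeg : ∃ i, q i = 0 ∧ α < 1
  · obtain ⟨i, hi⟩ := hdeg
    have htop : (w i : EReal) * alphaLossE α (q i) = ⊤ := by
      rw [alphaLossE, if_pos hi, EReal.coe_mul_top_of_pos (hw i)]
    have := single_le_sum (f := fun i => (w i : EReal) * alphaLossE α (q i))
      (fun j _ => EReal.mul_nonneg (EReal.coe_nonneg.2 (hw j).le)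
        (alphaLossE_nonneg hα0 hα1 (hq0 j) (hq1 j))) (mem_univ i)
    rw [htop, top_le_iff] at this
    rw [this]
    exact le_top
  · push Not at hdeg
    have hq : ∀ i, 0 < q i ∨ 1 < α := fun i =>
      ((hq0 i).lt_or_eq).imp id fun h => lt_of_le_of_ne (hdeg i h.symm) (Ne.symm hα1)
    simp only [alphaLossE_eq_coe_alphaLoss fun h => (ht _).ne' h.1,
      alphaLossE_eq_coe_alphaLoss fun h => not_le.2 h.2 (hdeg _ h.1), ← EReal.coe_mul,
      ← EReal.coe_finset_sum, EReal.coe_le_coe_iff]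
    exact sum_mul_alphaLoss_le_of_kkt hα0 hα1 hlam (fun i => (hw i).le) ht hkkt hq0 hq1 hq hsum

end Optimality

section Coverage

variable {U : Type*} [Fintype U] {k : ℕ}

variable (U k) in
def coverageSet : Set (U → ℝ) := {c | ∃ Q : (Fin k → U) → ℝ, IsPMF Q ∧ coversG Q = c}

variable (U k) in
def hypersimplex : Set (U → ℝ) := Set.univ.pi (fun _ => Set.Icc 0 1) ∩ {q | ∑ u, q u = k}

lemma coversG_mem_Icc {Q : (Fin k → U) → ℝ} (hQ : IsPMF Q) (u : U) :
    coversG Q u ∈ Set.Icc 0 1 := by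
  refine ⟨sum_nonneg fun a _ => ?_, hQ.2 ▸ sum_le_sum fun a _ => ?_⟩ <;>
    split_ifs <;> simp [hQ.1 a]

lemma sum_coversG_le {Q : (Fin k → U) → ℝ} (hQ : IsPMF Q) : ∑ u, coversG Q u ≤ k := by
  classical
  have hrange : ∀ a : Fin k → U, ∑ u, (if ∃ j, a j = u then Q a else 0) ≤ k * Q a := by
    intro a
    rw [← sum_filter, sum_const, nsmul_eq_mul]
    refine mul_le_mul_of_nonneg_right ?_ (hQ.1 a)
    calc ((univ.filter fun u => ∃ j, a j = u).card : ℝ)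
        = (univ.image a).card := by congr 2; ext u; simp
      _ ≤ k := by exact_mod_cast (card_image_le).trans (card_fin k).le
  calc ∑ u, coversG Q u = ∑ a, ∑ u, (if ∃ j, a j = u then Q a else 0) := by
        unfold coversG; rw [sum_comm]
    _ ≤ ∑ a, k * Q a := sum_le_sum fun a _ => hrange a
    _ = k := by rw [← mul_sum, hQ.2, mul_one]

lemma convex_coverageSet : Convex ℝ (coverageSet U k) := by
  rintro _ ⟨Q₁, hQ₁, rfl⟩ _ ⟨Q₂, hQ₂, rfl⟩ a b ha hb hab
  refine ⟨fun x => a * Q₁ x + b * Q₂ x, ⟨fun x => ?_, ?_⟩, funext fun u => ?_⟩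
  · have := hQ₁.1 x; have := hQ₂.1 x; positivity
  · rw [sum_add_distrib, ← mul_sum, ← mul_sum, hQ₁.2, hQ₂.2, mul_one, mul_one,
      hab]
  · simp only [coversG, Pi.add_apply, Pi.smul_apply, smul_eq_mul, mul_sum,
      ← sum_add_distrib]
    congr! 1 with x; split_ifs <;> ring

lemma mem_coverageSet_of_eq_zero_or_one {q : U → ℝ} (h01 : ∀ u, q u = 0 ∨ q u = 1)
    (hsum : ∑ u, q u = k) : q ∈ coverageSet U k := by
  classical
  set S := univ.filter fun u => q u = 1
  have hq : ∀ u, q u = if q u = 1 then 1 else 0 := fun u => by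
    rcases h01 u with h | h <;> simp [h]
  have hS : S.card = k := by
    rw [sum_congr rfl fun u _ => hq u, sum_boole] at hsum
    exact_mod_cast hsum
  set a : Fin k → U := fun j => S.equivFin.symm (Fin.cast hS.symm j)
  have ha : ∀ u, (∃ j, a j = u) ↔ u ∈ S := fun u =>
    ⟨fun ⟨j, hj⟩ => hj ▸ (S.equivFin.symm _).2, fun hu =>
      ⟨Fin.cast hS (S.equivFin ⟨u, hu⟩), by simp [a]⟩⟩
  refine ⟨fun b => if b = a then 1 else 0,
    ⟨fun b => by simp only; split_ifs <;> norm_num, by simp⟩, funext fun u => ?_⟩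
  rw [coversG, sum_eq_single a (fun b _ hb => by simp [hb]) (by simp), hq u]
  simp [ha, S]

end Coverage

section Hypersimplex

variable {U : Type*} [Fintype U] {k : ℕ}

lemma isCompact_hypersimplex : IsCompact (hypersimplex U k) :=
  (isCompact_univ_pi fun _ => isCompact_Icc).inter_right
    (isClosed_eq (continuous_finsetSum _ fun u _ => continuous_apply u) continuous_const)

lemma convex_hypersimplex : Convex ℝ (hypersimplex U k) := by
  refine (convex_pi fun _ _ => convex_Icc 0 1).inter ?_
  intro x hx y hy a b _ _ hab
  simp only [Set.mem_ofPred_eq, Pi.add_apply, Pi.smul_apply, smul_eq_mul, sum_add_distrib,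
    ← mul_sum] at hx hy ⊢
  rw [hx, hy, ← add_mul, hab, one_mul]

lemma add_smul_single_sub_single_mem_hypersimplex [DecidableEq U] {q : U → ℝ}
    (hq : q ∈ hypersimplex U k) {i j : U} (hji : j ≠ i) {c : ℝ}
    (hi : q i + c ∈ Set.Icc 0 1) (hj : q j - c ∈ Set.Icc 0 1) :
    q + c • (Pi.single i 1 - Pi.single j 1) ∈ hypersimplex U k := by
  refine ⟨fun u _ => ?_, ?_⟩
  · rcases eq_or_ne u i with rfl | hui
    · simpa [Pi.single_eq_of_ne' hji] using hi
    rcases eq_or_ne u j with rfl | huj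
    · simpa [Pi.single_eq_of_ne hui, sub_eq_add_neg] using hj
    · simpa [Pi.single_eq_of_ne hui, Pi.single_eq_of_ne huj] using hq.1 u trivial
  · simpa [sum_add_distrib, ← mul_sum] using hq.2

-- Otherwise `q i` would be an integer, being `k` minus a sum of zeros and ones.
lemma exists_ne_fractional_of_fractional {q : U → ℝ} (hsum : ∑ u, q u = k) {i : U}
    (hi0 : 0 < q i) (hi1 : q i < 1) : ∃ j, j ≠ i ∧ q j ≠ 0 ∧ q j ≠ 1 := by
  classical
  by_contra! h
  have hrest : ∑ u ∈ univ.erase i, q u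
      = ((univ.erase i).filter fun u => q u = 1).card := by
    rw [← sum_boole]
    refine sum_congr rfl fun u hu => ?_
    by_cases h0 : q u = 0
    · simp [h0]
    · simp [h u (ne_of_mem_erase hu) h0]
  rw [← add_sum_erase _ _ (mem_univ i), hrest] at hsum
  set m := ((univ.erase i).filter fun u => q u = 1).card
  have h1 : m < k := by exact_mod_cast (show (m : ℝ) < k by linarith)
  have h2 : k < m + 1 := by exact_mod_cast (show (k : ℝ) < m + 1 by linarith)
  omega

lemma eq_zero_or_eq_one_of_mem_extremePoints_hypersimplex {q : U → ℝ}
    (hq : q ∈ (hypersimplex U k).extremePoints ℝ) (i : U) : q i = 0 ∨ q i = 1 := by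
  classical
  obtain ⟨hqH, hext⟩ := hq
  by_contra! hi
  have hbox : ∀ u, 0 ≤ q u ∧ q u ≤ 1 := fun u => hqH.1 u trivial
  have hi0 : 0 < q i := lt_of_le_of_ne (hbox i).1 hi.1.symm
  have hi1 : q i < 1 := lt_of_le_of_ne (hbox i).2 hi.2
  obtain ⟨j, hji, hj⟩ := exists_ne_fractional_of_fractional hqH.2 hi0 hi1
  have hj0 : 0 < q j := lt_of_le_of_ne (hbox j).1 hj.1.symm
  have hj1 : q j < 1 := lt_of_le_of_ne (hbox j).2 hj.2
  -- shifting mass `t` between the two fractional coordinates in either direction stays inside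
  set v : U → ℝ := Pi.single i 1 - Pi.single j 1
  set t := min (min (q i) (1 - q i)) (min (q j) (1 - q j))
  have ht : 0 < t := lt_min (lt_min hi0 (by linarith)) (lt_min hj0 (by linarith))
  have hti : t ≤ q i ∧ t ≤ 1 - q i := le_min_iff.1 (min_le_left _ _)
  have htj : t ≤ q j ∧ t ≤ 1 - q j := le_min_iff.1 (min_le_right _ _)
  have hminus : q - t • v ∈ hypersimplex U k := by
    rw [sub_eq_add_neg, ← neg_smul]
    exact add_smul_single_sub_single_mem_hypersimplex hqH hji
      ⟨by linarith, by linarith⟩ ⟨by linarith, by linarith⟩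
  have hplus : q + t • v ∈ hypersimplex U k :=
    add_smul_single_sub_single_mem_hypersimplex hqH hji
      ⟨by linarith, by linarith⟩ ⟨by linarith, by linarith⟩
  have := congrFun (hext hminus hplus (mem_openSegment_sub_add q (t • v))) i
  simp [v, Pi.single_eq_of_ne' hji] at this
  exact ht.ne' this

lemma hypersimplex_subset_coverageSet : hypersimplex U k ⊆ coverageSet U k := by
  have hfin : ((hypersimplex U k).extremePoints ℝ).Finite :=
    (Set.Finite.pi (t := fun _ : U => ({0, 1} : Set ℝ)) fun _ => by simp).subset
      fun q hq => Set.mem_univ_pi.2 (eq_zero_or_eq_one_of_mem_extremePoints_hypersimplex hq)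
  rw [← closure_convexHull_extremePoints isCompact_hypersimplex convex_hypersimplex,
    (hfin.isClosed_convexHull ℝ).closure_eq]
  refine convexHull_min (fun q hq => ?_) convex_coverageSet
  exact mem_coverageSet_of_eq_zero_or_one
    (eq_zero_or_eq_one_of_mem_extremePoints_hypersimplex hq) hq.1.2

end Hypersimplex

lemma Finset.sum_Icc_eq_sum_Ico_add_sum_Icc {M : Type*} [AddCommMonoid M] (f : ℕ → M)
    {a b c : ℕ} (hab : a ≤ b) (hbc : b ≤ c + 1) :
    ∑ i ∈ Icc a c, f i = ∑ i ∈ Ico a b, f i + ∑ i ∈ Icc b c, f i := by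
  rw [← Ico_add_one_right_eq_Icc, ← Ico_add_one_right_eq_Icc, sum_Ico_consecutive _ hab hbc]

lemma Fin.sum_univ_add_one_eq_sum_Icc {M : Type*} [AddCommMonoid M] (f : ℕ → M) (n : ℕ) :
    ∑ x : Fin n, f (x + 1) = ∑ i ∈ Icc 1 n, f i := by
  rw [Fin.sum_univ_eq_sum_range (fun i => f (i + 1)), range_eq_Ico,
    sum_Ico_add' f, zero_add, Ico_add_one_right_eq_Icc]

section WaterFilling

variable {α : ℝ} {p : ℕ → ℝ} {k n : ℕ}

lemma sstar_spec (hk : 1 ≤ k) (hkn : k ≤ n) (hp : ∀ i ∈ Icc 1 n, 0 < p i) :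
    1 ≤ sstar α p k n ∧ sstar α p k n ≤ k ∧
      ((k : ℝ) - sstar α p k n + 1) * p (sstar α p k n) ^ α
        ≤ ∑ i ∈ Icc (sstar α p k n) n, p i ^ α := by
  have hk_mem : ((k : ℝ) - k + 1) * p k ^ α ≤ ∑ i ∈ Icc k n, p i ^ α := by
    rw [sub_self, zero_add, one_mul]
    refine single_le_sum (fun i hi => rpow_nonneg (hp i ?_).le α) (mem_Icc.2 ⟨le_rfl, hkn⟩)
    exact mem_Icc.2 ⟨hk.trans (mem_Icc.1 hi).1, (mem_Icc.1 hi).2⟩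
  exact Nat.sInf_mem (s := {r : ℕ | 1 ≤ r ∧ r ≤ k ∧
    ((k : ℝ) - r + 1) * p r ^ α ≤ ∑ i ∈ Icc r n, p i ^ α}) ⟨k, hk, le_rfl, hk_mem⟩

lemma sum_Icc_sstar_lt (hk : 1 ≤ k) (hkn : k ≤ n) (hp : ∀ i ∈ Icc 1 n, 0 < p i)
    (h : 2 ≤ sstar α p k n) :
    ∑ i ∈ Icc (sstar α p k n) n, p i ^ α
      < ((k : ℝ) - sstar α p k n + 1) * p (sstar α p k n - 1) ^ α := by
  set s := sstar α p k n
  have hsk : s ≤ k := (sstar_spec hk hkn hp).2.1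
  have hpred : ¬ (((k : ℝ) - (s - 1 : ℕ) + 1) * p (s - 1) ^ α
      ≤ ∑ i ∈ Icc (s - 1) n, p i ^ α) := fun hle =>
    Nat.notMem_of_lt_sInf (by omega : s - 1 < s) ⟨by omega, by omega, hle⟩
  have hins : Icc (s - 1) n = insert (s - 1) (Icc s n) := by
    ext i; simp only [mem_Icc, mem_insert]; omega
  rw [hins, sum_insert (by simp only [mem_Icc]; omega), Nat.cast_sub (by omega)] at hpred
  push_cast at hpred
  linarith

/-- The covering probabilities of an optimal strategy: the `s* - 1` most likely elements are
guessed surely, the others are covered with probability proportional to `p i ^ α`. -/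
noncomputable def optCover (α : ℝ) (p : ℕ → ℝ) (k n i : ℕ) : ℝ :=
  if i < sstar α p k n then 1
  else ((k : ℝ) - sstar α p k n + 1) * p i ^ α / ∑ j ∈ Icc (sstar α p k n) n, p j ^ α

lemma optCover_of_lt {i : ℕ} (h : i < sstar α p k n) : optCover α p k n i = 1 := if_pos h

lemma optCover_of_le {i : ℕ} (h : sstar α p k n ≤ i) :
    optCover α p k n i
      = ((k : ℝ) - sstar α p k n + 1) * p i ^ α / ∑ j ∈ Icc (sstar α p k n) n, p j ^ α :=
  if_neg h.not_gt

variable (hk : 1 ≤ k) (hkn : k ≤ n) (hα0 : 0 < α) (hpos : ∀ i ∈ Icc 1 n, 0 < p i)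
  (hmono : ∀ i j, 1 ≤ i → i ≤ j → j ≤ n → p j ≤ p i)
include hk hkn hpos

lemma sum_Icc_sstar_pos : 0 < ∑ i ∈ Icc (sstar α p k n) n, p i ^ α := by
  obtain ⟨hs1, hsk, -⟩ := sstar_spec (α := α) hk hkn hpos
  exact sum_pos (fun i hi => rpow_pos_of_pos (hpos i (mem_Icc.2 ⟨hs1.trans (mem_Icc.1 hi).1,
    (mem_Icc.1 hi).2⟩)) α) ⟨_, mem_Icc.2 ⟨le_rfl, hsk.trans hkn⟩⟩

lemma optCover_pos {i : ℕ} (hi : i ∈ Icc 1 n) : 0 < optCover α p k n i := by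
  obtain ⟨hs1, hsk, -⟩ := sstar_spec (α := α) hk hkn hpos
  unfold optCover
  split_ifs with h
  · exact one_pos
  · have : (sstar α p k n : ℝ) ≤ k := by exact_mod_cast hsk
    have := sum_Icc_sstar_pos (α := α) hk hkn hpos
    have := rpow_pos_of_pos (hpos i hi) α
    positivity

include hα0 hmono in
lemma optCover_le_one {i : ℕ} (hi : i ∈ Icc 1 n) : optCover α p k n i ≤ 1 := by
  obtain ⟨hs1, -, hsle⟩ := sstar_spec (α := α) hk hkn hpos
  obtain ⟨-, hin⟩ := mem_Icc.1 hi
  rcases lt_or_ge i (sstar α p k n) with h | h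
  · rw [optCover_of_lt h]
  · rw [optCover_of_le h, div_le_one (sum_Icc_sstar_pos hk hkn hpos)]
    refine le_trans (mul_le_mul_of_nonneg_left ?_ ?_) hsle
    · exact rpow_le_rpow (hpos i hi).le (hmono _ i hs1 h hin) hα0.le
    · have : (sstar α p k n : ℝ) ≤ k := by exact_mod_cast (sstar_spec (α := α) hk hkn hpos).2.1
      linarith

lemma sum_optCover : ∑ i ∈ Icc 1 n, optCover α p k n i = k := by
  obtain ⟨hs1, hsk, -⟩ := sstar_spec (α := α) hk hkn hpos
  rw [sum_Icc_eq_sum_Ico_add_sum_Icc _ hs1 (by omega),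
    sum_congr rfl fun i hi => optCover_of_lt (mem_Ico.1 hi).2,
    sum_congr rfl fun i hi => optCover_of_le (mem_Icc.1 hi).1, ← sum_div, ← mul_sum,
    mul_div_cancel_right₀ _ (sum_Icc_sstar_pos hk hkn hpos).ne', sum_const, Nat.card_Ico,
    nsmul_one, Nat.cast_sub hs1]
  ring

lemma MEalpha_eq_sum_optCover :
    MEalpha α p k n = ∑ i ∈ Icc 1 n, p i * alphaLoss α (optCover α p k n i) := by
  obtain ⟨hs1, hsk, -⟩ := sstar_spec (α := α) hk hkn hpos
  rw [sum_Icc_eq_sum_Ico_add_sum_Icc _ hs1 (by omega),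
    sum_eq_zero fun i hi => by rw [optCover_of_lt (mem_Ico.1 hi).2, alphaLoss_one, mul_zero],
    zero_add, MEalpha, mul_sum]
  refine sum_congr rfl fun i hi => ?_
  rw [optCover_of_le (mem_Icc.1 hi).1, alphaLoss]
  ring

include hα0 hmono in
lemma exists_kkt_optCover : ∃ lam : ℝ, 0 ≤ lam ∧ ∀ i ∈ Icc 1 n,
    p i * optCover α p k n i ^ (-α⁻¹) = lam ∨ (optCover α p k n i = 1 ∧ lam ≤ p i) := by
  obtain ⟨hs1, hsk, -⟩ := sstar_spec (α := α) hk hkn hpos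
  set s := sstar α p k n
  set S := ∑ j ∈ Icc s n, p j ^ α
  set m : ℝ := k - s + 1
  have hS : 0 < S := sum_Icc_sstar_pos hk hkn hpos
  have hm : 0 < m := by
    have : (s : ℝ) ≤ k := by exact_mod_cast hsk
    linarith
  refine ⟨(m / S) ^ (-α⁻¹), by positivity, fun i hi => ?_⟩
  obtain ⟨hi1, hin⟩ := mem_Icc.1 hi
  have hpi := hpos i hi
  rcases lt_or_ge i s with his | his
  · refine Or.inr ⟨optCover_of_lt his, ?_⟩
    have hlt := sum_Icc_sstar_lt hk hkn hpos (by omega : 2 ≤ s)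
    have hmono' : p (s - 1) ^ α ≤ p i ^ α := rpow_le_rpow
      (hpos _ (mem_Icc.2 ⟨by omega, by omega⟩)).le (hmono i _ hi1 (by omega) (by omega)) hα0.le
    rw [rpow_neg (div_pos hm hS).le, ← inv_rpow (div_pos hm hS).le, inv_div,
      rpow_inv_le_iff_of_pos (div_pos hS hm).le hpi.le hα0, div_le_iff₀ hm]
    nlinarith
  · refine Or.inl ?_
    rw [optCover_of_le his, mul_div_right_comm,
      mul_rpow (div_pos hm hS).le (rpow_pos_of_pos hpi α).le, ← rpow_mul hpi.le, mul_neg,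
      mul_inv_cancel₀ hα0.ne', rpow_neg_one]
    field_simp

end WaterFilling

theorem stmt12_general (n k : ℕ) (hk : 1 ≤ k) (hkn : k < n)
    (α : ℝ) (hα0 : 0 < α) (hα1 : α ≠ 1)
    (p : ℕ → ℝ) (hpos : ∀ i ∈ Finset.Icc 1 n, 0 < p i)
    (hmono : ∀ i j, 1 ≤ i → i ≤ j → j ≤ n → p j ≤ p i) :
    IsLeast
      {v : EReal | ∃ Q : (Fin k → Fin n) → ℝ, IsPMF Q ∧
        v = ∑ x : Fin n, ((p (x.1 + 1) : ℝ) : EReal) * alphaLossE α (coversG Q x)}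
      ((MEalpha α p k n : ℝ) : EReal) := by
  have hIcc : ∀ x : Fin n, (x : ℕ) + 1 ∈ Icc 1 n := fun x => mem_Icc.2 ⟨by omega, x.2⟩
  have hc_pos : ∀ x : Fin n, 0 < optCover α p k n (x + 1) := fun x =>
    optCover_pos hk hkn.le hpos (hIcc x)
  have hc : (fun x : Fin n => optCover α p k n (x + 1)) ∈ hypersimplex (Fin n) k :=
    ⟨fun x _ => ⟨(hc_pos x).le, optCover_le_one hk hkn.le hα0 hpos hmono (hIcc x)⟩,
      (Fin.sum_univ_add_one_eq_sum_Icc _ n).trans (sum_optCover hk hkn.le hpos)⟩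
  have hME : ((MEalpha α p k n : ℝ) : EReal)
      = ∑ x : Fin n, ((p (x + 1) : ℝ) : EReal) * alphaLossE α (optCover α p k n (x + 1)) := by
    rw [MEalpha_eq_sum_optCover hk hkn.le hpos, ← Fin.sum_univ_add_one_eq_sum_Icc,
      EReal.coe_finset_sum]
    refine sum_congr rfl fun x _ => ?_
    rw [alphaLossE_eq_coe_alphaLoss fun h => (hc_pos x).ne' h.1, EReal.coe_mul]
  obtain ⟨lam, hlam, hkkt⟩ := exists_kkt_optCover hk hkn.le hα0 hpos hmono
  rw [hME]
  refine ⟨?_, ?_⟩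
  · obtain ⟨Q, hQ, hQc⟩ := hypersimplex_subset_coverageSet hc
    exact ⟨Q, hQ, by rw [hQc]⟩
  · rintro _ ⟨Q, hQ, rfl⟩
    refine sum_mul_alphaLossE_le_of_kkt hα0 hα1 hlam (fun x => hpos _ (hIcc x)) hc_pos
      (fun x => hkkt _ (hIcc x)) (fun x => (coversG_mem_Icc hQ x).1)
      (fun x => (coversG_mem_Icc hQ x).2) ?_
    rw [hc.2]
    exact sum_coversG_le hQ

/-- The minimal expected `α`-loss under `k` guesses, for a pmf
`p_1 ≥ … ≥ p_n > 0` and `1 ≤ k < n`, equals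
`(α/(α−1)) ∑_{i=s*}^n p_i (1 − ((k−s*+1) p_i^α / ∑_{j=s*}^n p_j^α)^{(α−1)/α})`. -/
theorem stmt12 (n k : ℕ) (hk : 1 ≤ k) (hkn : k < n)
    (α : ℝ) (hα0 : 0 < α) (hα1 : α ≠ 1)
    (p : ℕ → ℝ) (hpos : ∀ i ∈ Finset.Icc 1 n, 0 < p i)
    (hmono : ∀ i j, 1 ≤ i → i ≤ j → j ≤ n → p j ≤ p i)
    (hsum : ∑ i ∈ Finset.Icc 1 n, p i = 1) :
    IsLeast
      {v : EReal | ∃ Q : (Fin k → Fin n) → ℝ, IsPMF Q ∧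
        v = ∑ x : Fin n, ((p (x.1 + 1) : ℝ) : EReal) * alphaLossE α (coversG Q x)}
      ((MEalpha α p k n : ℝ) : EReal) :=
  stmt12_general n k hk hkn α hα0 hα1 p hpos hmono
end

section
/- Let P_{XY} be a joint pmf on finite alphabets 𝒳×𝒴, and let y∈𝒴 satisfy P_Y(y)>0 and P_{X|Y=y} ≠ P_X. Then sup over finite alphabets 𝒰 and channels P_{U|X} from 𝒳 to 𝒰 of [ H(P_U) − H(P_{U|Y=y}) ] = ∞, i.e., the quantity H(P_U) − H(P_{U|Y=y}) is unbounded above; here P_U(u)=Σ_x P_X(x)P_{U|X}(u|x), P_{U|Y=y}(u)=Σ_x P_{X|Y}(x|y)P_{U|X}(u|x), and H denotes Shannon entropy. -/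
/-- A channel (row-stochastic kernel). -/
def IsChannel {X U : Type*} [Fintype U] (K : X → U → ℝ) : Prop :=
  ∀ x, IsPMF (K x)

/-- The pmf induced on `U` by a pmf `P` on `X` and a channel `K`. -/
noncomputable def push {X U : Type*} [Fintype X] (P : X → ℝ) (K : X → U → ℝ) : U → ℝ :=
  fun u => ∑ x, P x * K x u

/-- Shannon entropy `H(R) = −∑_u R(u) log R(u)` (terms with `R(u) = 0` vanish). -/
noncomputable def entropy {U : Type*} [Fintype U] (R : U → ℝ) : ℝ :=
  -∑ u, R u * Real.log (R u)

open Finset Real Filter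

lemma IsPMF.sum_marginal_eq_one {X Y : Type*} [Fintype X] [Fintype Y] {P : X → Y → ℝ}
    (hP : IsPMF (fun z : X × Y => P z.1 z.2)) : ∑ x, ∑ y, P x y = 1 := by
  rw [← Fintype.sum_prod_type', hP.2]

lemma sum_div_sum_eq_one {X K : Type*} [Fintype X] [DivisionSemiring K] {f : X → K} (hf : ∑ x, f x ≠ 0) :
    ∑ x, f x / ∑ x', f x' = 1 := by
  rw [← sum_div, div_self hf]

lemma exists_lt_of_sum_eq_of_ne {ι M : Type*} [Fintype ι] [AddCommMonoid M] [LinearOrder M]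
    [IsOrderedCancelAddMonoid M] {f g : ι → M}
    (hsum : ∑ i, f i = ∑ i, g i) (hne : f ≠ g) : ∃ i, f i < g i := by
  by_contra! hle
  obtain ⟨i, hi⟩ := Function.ne_iff.mp hne
  have : ∑ i, g i < ∑ i, f i :=
    sum_lt_sum (fun i _ => hle i) ⟨i, mem_univ i, (hle i).lt_of_ne' hi⟩
  exact this.ne' hsum

lemma exists_nat_lt_add_mul_log (b : ℝ) {a : ℝ} (ha : 0 < a) (M : ℝ) :
    ∃ n : ℕ, n ≠ 0 ∧ M < b + a * log n := by
  have hlog : Tendsto (fun n : ℕ => b + a * log n) atTop atTop :=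
    tendsto_atTop_add_const_left _ b
      ((tendsto_log_atTop.comp tendsto_natCast_atTop_atTop).const_mul_atTop ha)
  exact ((eventually_ne_atTop 0).and (hlog.eventually_gt_atTop M)).exists

noncomputable def splitChannel {X : Type*} [DecidableEq X] (x₀ : X) (n : ℕ) :
    X → Option (Fin n) → ℝ :=
  fun x u => if x = x₀ then (if u = none then 0 else 1 / n) else (if u = none then 1 else 0)

section splitChannel

variable {X : Type*} [DecidableEq X] (x₀ : X) {n : ℕ}

lemma isChannel_splitChannel (hn : n ≠ 0) : IsChannel (splitChannel x₀ n) := by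
  intro x
  refine ⟨fun u => ?_, ?_⟩
  · unfold splitChannel
    split_ifs <;> positivity
  · by_cases hx : x = x₀ <;> simp [splitChannel, hx, Fintype.sum_option, hn]

variable [Fintype X]

lemma push_splitChannel_none {R : X → ℝ} (hR : ∑ x, R x = 1) :
    push R (splitChannel x₀ n) none = 1 - R x₀ := by
  have hterm : ∀ x, R x * splitChannel x₀ n x none = R x - if x = x₀ then R x else 0 := by
    intro x
    by_cases hx : x = x₀ <;> simp [splitChannel, hx]
  simp only [push, hterm, sum_sub_distrib, hR, sum_ite_eq', mem_univ, if_true]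

lemma push_splitChannel_some (R : X → ℝ) (i : Fin n) :
    push R (splitChannel x₀ n) (some i) = R x₀ / n := by
  have hterm : ∀ x, R x * splitChannel x₀ n x (some i) = if x = x₀ then R x₀ / n else 0 := by
    intro x
    by_cases hx : x = x₀ <;> simp [splitChannel, hx, div_eq_mul_inv]
  simp only [push, hterm, sum_ite_eq', mem_univ, if_true]

lemma entropy_push_splitChannel (hn : n ≠ 0) {R : X → ℝ} (hR : ∑ x, R x = 1) :
    entropy (push R (splitChannel x₀ n)) =
      negMulLog (1 - R x₀) + negMulLog (R x₀) + R x₀ * log n := by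
  have hn' : (n : ℝ) ≠ 0 := Nat.cast_ne_zero.mpr hn
  have hsome : ∑ i : Fin n, push R (splitChannel x₀ n) (some i) *
      log (push R (splitChannel x₀ n) (some i)) = -negMulLog (R x₀) - R x₀ * log n := by
    simp only [push_splitChannel_some, sum_const, card_univ, Fintype.card_fin, nsmul_eq_mul]
    rw [← neg_neg (R x₀ / n * _), ← neg_mul, ← negMulLog, div_eq_mul_inv, negMulLog_mul]
    simp only [negMulLog, log_inv]
    field_simp
    ring
  rw [entropy, Fintype.sum_option, push_splitChannel_none x₀ hR, hsome]
  simp only [negMulLog]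
  ring

end splitChannel

/-- If `P_Y(y) > 0` and `P_{X|Y=y} ≠ P_X`, then
`sup_{U, P_{U|X}} (H(P_U) − H(P_{U|Y=y})) = ∞`, i.e. the quantity is unbounded above. -/
theorem stmt19 {X Y : Type} [Fintype X] [Fintype Y]
    (P : X → Y → ℝ) (hP : IsPMF (fun z : X × Y => P z.1 z.2))
    (y : Y) (hy : 0 < ∑ x, P x y)
    (hne : (fun x => P x y / ∑ x', P x' y) ≠ (fun x => ∑ y', P x y')) :
    ∀ M : ℝ, ∃ (U : Type) (iU : Fintype U) (K : X → U → ℝ),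
      @IsChannel X U iU K ∧
      M < @entropy U iU (push (fun x => ∑ y', P x y') K) -
          @entropy U iU (push (fun x => P x y / ∑ x', P x' y) K) := by
  classical
  intro M
  have hcond := sum_div_sum_eq_one hy.ne'
  have hmarg := hP.sum_marginal_eq_one
  obtain ⟨x₀, hlt⟩ := exists_lt_of_sum_eq_of_ne (hcond.trans hmarg.symm) hne
  set p := ∑ y', P x₀ y'
  set q := P x₀ y / ∑ x', P x' y
  obtain ⟨n, hn, hM⟩ := exists_nat_lt_add_mul_log
    (negMulLog (1 - p) + negMulLog p - negMulLog (1 - q) - negMulLog q) (sub_pos.mpr hlt) M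
  refine ⟨Option (Fin n), inferInstance, splitChannel x₀ n, isChannel_splitChannel x₀ hn, ?_⟩
  rw [entropy_push_splitChannel x₀ hn hmarg, entropy_push_splitChannel x₀ hn hcond]
  linarith
end
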